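/- Let G be a locally compact Hausdorff groupoid and let p : Σ⁰ → G⁰ be the map sending a closed subgroup H of an isotropy group to its base unit p(H) = u where r(H) = s(H) = {u}. Then p is continuous, and for every compact set K ⊆ G⁰ the preimage p⁻¹(K) is compact in Σ⁰ (i.e., Σ⁰ is conditionally compact over G⁰). -/
import Mathlib


open MeasureTheory
/-- A topological groupoid, modeled as its arrow space with units embedded. -/
structure TopGroupoid (G : Type*) [TopologicalSpace G] where
  src : G → G
  rng : G → G
  comp : G → G → G
  inv : G → G
  src_src : ∀ x, src (src x) = src x
  rng_src : ∀ x, rng (src x) = src x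
  src_rng : ∀ x, src (rng x) = rng x
  rng_rng : ∀ x, rng (rng x) = rng x
  src_comp : ∀ x y, src x = rng y → src (comp x y) = src y
  rng_comp : ∀ x y, src x = rng y → rng (comp x y) = rng x
  comp_assoc : ∀ x y z, src x = rng y → src y = rng z →
    comp (comp x y) z = comp x (comp y z)
  comp_rng : ∀ x, comp (rng x) x = x
  comp_src : ∀ x, comp x (src x) = x
  src_inv : ∀ x, src (inv x) = rng x
  rng_inv : ∀ x, rng (inv x) = src x
  comp_inv : ∀ x, comp x (inv x) = rng x
  inv_comp : ∀ x, comp (inv x) x = src x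
  continuous_src : Continuous src
  continuous_rng : Continuous rng
  continuous_inv : Continuous inv
  continuous_comp : Continuous fun p : {p : G × G // src p.1 = rng p.2} => comp p.1.1 p.1.2

variable {G : Type*} [TopologicalSpace G]

/-- `H` is a closed subgroup of the isotropy group of the groupoid at the unit `u`. -/
def TopGroupoid.IsIsotropySubgroup (gp : TopGroupoid G) (H : Set G) (u : G) : Prop :=
  IsClosed H ∧ gp.src u = u ∧ u ∈ H ∧ (∀ x ∈ H, gp.src x = u ∧ gp.rng x = u) ∧
    (∀ x ∈ H, gp.inv x ∈ H) ∧ ∀ x ∈ H, ∀ y ∈ H, gp.comp x y ∈ H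

/-- Conjugation `γ ↦ σγσ⁻¹` in a groupoid. -/
def TopGroupoid.conj (gp : TopGroupoid G) (σ γ : G) : G :=
  gp.comp (gp.comp σ γ) (gp.inv σ)

/-- The conjugate `σ·H = σHσ⁻¹` of a subgroup. -/
def TopGroupoid.conjSet (gp : TopGroupoid G) (σ : G) (H : Set G) : Set G :=
  gp.conj σ '' H

/-- The space of closed subsets of `G`, to be given the Fell topology. -/
def FellCloseds (G : Type*) [TopologicalSpace G] : Type _ := {F : Set G // IsClosed F}

/-- The Fell topology on the closed subsets of `G`: generated by the sets
`U(K; U₁,…,Uₙ) = {F : F ∩ K = ∅, F ∩ Uᵢ ≠ ∅}` with `K` compact and the `Uᵢ` open. -/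
instance (G : Type*) [TopologicalSpace G] : TopologicalSpace (FellCloseds G) :=
  TopologicalSpace.generateFrom
    ({S | ∃ K : Set G, IsCompact K ∧ S = {F : FellCloseds G | Disjoint F.1 K}} ∪
     {S | ∃ U : Set G, IsOpen U ∧ S = {F : FellCloseds G | (F.1 ∩ U).Nonempty}})

variable {G : Type*} [TopologicalSpace G]

/-- The space `Σ⁰` of closed subgroups of isotropy groups of the groupoid `gp`,
as a subset of the closed subsets of `G` with the Fell topology. -/
def sigmaZero (gp : TopGroupoid G) : Set (FellCloseds G) :=
  {H | ∃ u, gp.IsIsotropySubgroup H.1 u}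

section Aux
variable {G : Type*} [TopologicalSpace G]

lemma fell_isOpen_disjoint {L : Set G} (hL : IsCompact L) :
    IsOpen {F : FellCloseds G | Disjoint F.1 L} :=
  TopologicalSpace.isOpen_generateFrom_of_mem (Or.inl ⟨L, hL, rfl⟩)

lemma fell_isOpen_hits {U : Set G} (hU : IsOpen U) :
    IsOpen {F : FellCloseds G | (F.1 ∩ U).Nonempty} :=
  TopologicalSpace.isOpen_generateFrom_of_mem (Or.inr ⟨U, hU, rfl⟩)

lemma le_nhds_of_subbasis {α : Type*} (g : Set (Set α)) (f : Filter α) (a : α)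
    (h : ∀ s ∈ g, a ∈ s → s ∈ f) : f ≤ @nhds α (TopologicalSpace.generateFrom g) a := by
  rw [TopologicalSpace.nhds_generateFrom]
  exact le_iInf₂ fun s hs => Filter.le_principal_iff.mpr (h s hs.2 hs.1)

lemma fellCompactSpace : CompactSpace (FellCloseds G) := by
  constructor
  rw [isCompact_iff_ultrafilter_le_nhds]
  intro 𝒰 _
  set F0 : Set G := {x | ∀ U : Set G, IsOpen U → x ∈ U →
      {A : FellCloseds G | (A.1 ∩ U).Nonempty} ∈ 𝒰} with hF0
  have hclosed : IsClosed F0 := by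
    rw [← isOpen_compl_iff, isOpen_iff_forall_mem_open]
    intro x hx
    simp only [hF0, Set.mem_compl_iff, Set.mem_setOf_eq] at hx
    push_neg at hx
    obtain ⟨U, hU, hxU, hne⟩ := hx
    exact ⟨U, fun y hy hyF => hne (hyF U hU hy), hU, hxU⟩
  refine ⟨⟨F0, hclosed⟩, trivial, ?_⟩
  refine le_nhds_of_subbasis _ _ _ ?_
  rintro s hsub hmem
  rcases hsub with ⟨L, hL, rfl⟩ | ⟨U, hU, rfl⟩
  · -- hmem : Disjoint F0 L
    have key : ∀ x ∈ L, ∃ U : Set G, IsOpen U ∧ x ∈ U ∧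
        {A : FellCloseds G | (A.1 ∩ U).Nonempty}ᶜ ∈ 𝒰 := by
      intro x hxL
      have hx : x ∉ F0 := fun h => Set.disjoint_left.mp hmem h hxL
      simp only [hF0, Set.mem_setOf_eq] at hx
      push_neg at hx
      obtain ⟨U, hU, hxU, hne⟩ := hx
      exact ⟨U, hU, hxU, Ultrafilter.compl_mem_iff_notMem.mpr hne⟩
    let ι := {q : Set G // IsOpen q ∧ {A : FellCloseds G | (A.1 ∩ q).Nonempty}ᶜ ∈ 𝒰}
    have hcov : L ⊆ ⋃ i : ι, i.1 := by
      intro x hx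
      obtain ⟨U, hU, hxU, hm⟩ := key x hx
      exact Set.mem_iUnion.mpr ⟨⟨U, hU, hm⟩, hxU⟩
    obtain ⟨t, ht⟩ := hL.elim_finite_subcover (fun i : ι => i.1) (fun i => i.2.1) hcov
    have hInter : (⋂ i ∈ t, {A : FellCloseds G | (A.1 ∩ i.1).Nonempty}ᶜ) ∈ 𝒰 :=
      (Filter.biInter_mem t.finite_toSet).mpr fun i _ => i.2.2
    refine Filter.mem_of_superset hInter ?_
    intro A hA
    simp only [Set.mem_iInter, Set.mem_compl_iff, Set.mem_setOf_eq] at hA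
    refine Set.disjoint_left.mpr fun {a} haA haL => ?_
    obtain ⟨i, hit, hai⟩ := Set.mem_iUnion₂.mp (ht haL)
    exact hA i hit ⟨a, haA, hai⟩
  · obtain ⟨x, hxF, hxU⟩ := hmem
    exact hxF U hU hxU

lemma unit_unique (gp : TopGroupoid G) {H : Set G} {u v : G}
    (hu : gp.IsIsotropySubgroup H u) (hv : gp.IsIsotropySubgroup H v) : u = v :=
  ((hu.2.2.2.1 v hv.2.2.1).1).symm.trans hv.2.1

lemma isClosed_isoSet [T2Space G] [LocallyCompactSpace G] (gp : TopGroupoid G)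
    {K : Set G} (hKu : K ⊆ {u | gp.src u = u}) (hK : IsCompact K) :
    IsClosed {F : FellCloseds G | ∃ u ∈ K, gp.IsIsotropySubgroup F.1 u} := by
  set C : Set (FellCloseds G) := {F | ∃ u ∈ K, gp.IsIsotropySubgroup F.1 u} with hCdef
  have hCW : ∀ F ∈ C, F.1 ⊆ {x | gp.src x = gp.rng x ∧ gp.src x ∈ K} := by
    rintro F ⟨u, huK, hu⟩ x hx
    obtain ⟨hs, hr⟩ := hu.2.2.2.1 x hx
    exact ⟨hs.trans hr.symm, hs ▸ huK⟩
  rw [← isOpen_compl_iff, isOpen_iff_forall_mem_open]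
  intro F hF
  set W : Set G := {x | gp.src x = gp.rng x ∧ gp.src x ∈ K} with hWdef
  have hWclosed : IsClosed W :=
    (isClosed_eq gp.continuous_src gp.continuous_rng).inter
      (hK.isClosed.preimage gp.continuous_src)
  by_cases hA : Disjoint F.1 K
  · refine ⟨{F' | Disjoint F'.1 K}, ?_, fell_isOpen_disjoint hK, hA⟩
    rintro F' hF' ⟨u, huK, hu⟩
    exact Set.disjoint_left.mp hF' hu.2.2.1 huK
  by_cases hB : ¬ F.1 ⊆ W
  · obtain ⟨x, hxF, hxW⟩ := Set.not_subset.mp hB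
    refine ⟨{F' | (F'.1 ∩ Wᶜ).Nonempty}, ?_, fell_isOpen_hits hWclosed.isOpen_compl,
      ⟨x, hxF, hxW⟩⟩
    rintro F' ⟨x', hx'F, hx'W⟩ hF'C
    exact hx'W (hCW F' hF'C hx'F)
  push_neg at hB
  by_cases hC2 : ∃ x ∈ F.1, ∃ y ∈ F.1, gp.src x ≠ gp.src y
  · obtain ⟨x, hxF, y, hyF, hxy⟩ := hC2
    obtain ⟨A, B, hAo, hBo, hxA, hyB, hAB⟩ := t2_separation hxy
    refine ⟨{F' | (F'.1 ∩ gp.src ⁻¹' A).Nonempty} ∩ {F' | (F'.1 ∩ gp.src ⁻¹' B).Nonempty},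
      ?_, (fell_isOpen_hits (hAo.preimage gp.continuous_src)).inter
        (fell_isOpen_hits (hBo.preimage gp.continuous_src)),
      ⟨x, hxF, hxA⟩, ⟨y, hyF, hyB⟩⟩
    rintro F' ⟨⟨x', hx'F, hx'A⟩, ⟨y', hy'F, hy'B⟩⟩ ⟨u, huK, hu⟩
    have h1 := (hu.2.2.2.1 x' hx'F).1
    have h2 := (hu.2.2.2.1 y' hy'F).1
    exact Set.disjoint_left.mp hAB hx'A (h1.trans h2.symm ▸ hy'B)
  push_neg at hC2
  obtain ⟨w, hwF, hwK⟩ := Set.not_disjoint_iff.mp hA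
  set u : G := gp.src w with hu_def
  have huK : u ∈ K := (hB hwF).2
  have hsrc : ∀ x ∈ F.1, gp.src x = u := fun x hx => hC2 x hx w hwF
  have hrng : ∀ x ∈ F.1, gp.rng x = u := fun x hx => ((hB hx).1).symm.trans (hsrc x hx)
  by_cases hD : u ∉ F.1
  · obtain ⟨L, hLc, huL, hLsub⟩ := exists_compact_subset F.2.isOpen_compl hD
    refine ⟨{F' | (F'.1 ∩ gp.src ⁻¹' interior L).Nonempty} ∩ {F' | Disjoint F'.1 L},
      ?_, (fell_isOpen_hits (isOpen_interior.preimage gp.continuous_src)).inter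
        (fell_isOpen_disjoint hLc),
      ⟨w, hwF, huL⟩, Set.disjoint_left.mpr fun {a} haF haL => hLsub haL haF⟩
    rintro F' ⟨⟨x', hx'F, hx'V⟩, hdisj⟩ ⟨u', hu'K, hu'⟩
    have : gp.src x' = u' := (hu'.2.2.2.1 x' hx'F).1
    exact Set.disjoint_left.mp hdisj hu'.2.2.1 (interior_subset (this ▸ hx'V))
  push_neg at hD
  by_cases hE : ∃ x ∈ F.1, gp.inv x ∉ F.1
  · obtain ⟨x, hxF, hxinv⟩ := hE
    obtain ⟨L, hLc, hzL, hLsub⟩ := exists_compact_subset F.2.isOpen_compl hxinv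
    refine ⟨{F' | (F'.1 ∩ gp.inv ⁻¹' interior L).Nonempty} ∩ {F' | Disjoint F'.1 L},
      ?_, (fell_isOpen_hits (isOpen_interior.preimage gp.continuous_inv)).inter
        (fell_isOpen_disjoint hLc),
      ⟨x, hxF, hzL⟩, Set.disjoint_left.mpr fun {a} haF haL => hLsub haL haF⟩
    rintro F' ⟨⟨x', hx'F, hx'V⟩, hdisj⟩ ⟨u', hu'K, hu'⟩
    exact Set.disjoint_left.mp hdisj (hu'.2.2.2.2.1 x' hx'F) (interior_subset hx'V)
  push_neg at hE
  by_cases hFc : ∃ x ∈ F.1, ∃ y ∈ F.1, gp.comp x y ∉ F.1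
  · obtain ⟨x, hxF, y, hyF, hz⟩ := hFc
    obtain ⟨L, hLc, hzL, hLsub⟩ := exists_compact_subset F.2.isOpen_compl hz
    have hcomp : gp.src x = gp.rng y := (hsrc x hxF).trans (hrng y hyF).symm
    have hpre : IsOpen ((fun p : {p : G × G // gp.src p.1 = gp.rng p.2} =>
        gp.comp p.1.1 p.1.2) ⁻¹' interior L) :=
      isOpen_interior.preimage gp.continuous_comp
    obtain ⟨O', hO'o, hO'eq⟩ := isOpen_induced_iff.mp hpre
    have hxyO : ((x, y) : G × G) ∈ O' := by
      have : (⟨(x, y), hcomp⟩ : {p : G × G // gp.src p.1 = gp.rng p.2}) ∈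
          Subtype.val ⁻¹' O' := by
        rw [hO'eq]; exact hzL
      exact this
    obtain ⟨A, B, hAo, hBo, hxA, hyB, hAB⟩ := isOpen_prod_iff.mp hO'o x y hxyO
    refine ⟨{F' | (F'.1 ∩ A).Nonempty} ∩ ({F' | (F'.1 ∩ B).Nonempty} ∩
      {F' | Disjoint F'.1 L}),
      ?_, (fell_isOpen_hits hAo).inter ((fell_isOpen_hits hBo).inter
        (fell_isOpen_disjoint hLc)),
      ⟨x, hxF, hxA⟩, ⟨y, hyF, hyB⟩, Set.disjoint_left.mpr fun {a} haF haL => hLsub haL haF⟩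
    rintro F' ⟨⟨x', hx'F, hx'A⟩, ⟨y', hy'F, hy'B⟩, hdisj⟩ ⟨u', hu'K, hu'⟩
    have hcomp' : gp.src x' = gp.rng y' :=
      ((hu'.2.2.2.1 x' hx'F).1).trans ((hu'.2.2.2.1 y' hy'F).2).symm
    have hmemO : (⟨(x', y'), hcomp'⟩ : {p : G × G // gp.src p.1 = gp.rng p.2}) ∈
        Subtype.val ⁻¹' O' := hAB ⟨hx'A, hy'B⟩
    rw [hO'eq] at hmemO
    exact Set.disjoint_left.mp hdisj (hu'.2.2.2.2.2 x' hx'F y' hy'F)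
      (interior_subset hmemO)
  push_neg at hFc
  exact absurd ⟨u, huK, F.2, hKu huK, hD, fun x hx => ⟨hsrc x hx, hrng x hx⟩,
    hE, hFc⟩ hF

end Aux

/-- Let `p : Σ⁰ → G⁰` send a closed isotropy subgroup `H` to its base
unit, i.e. `p(H)` is the unit `u` with `r(H) = s(H) = {u}`.  Then `p` is continuous and
`p⁻¹(K)` is compact in `Σ⁰` for every compact `K ⊆ G⁰` (`Σ⁰` is conditionally compact
over `G⁰`). -/
theorem stmt3 [T2Space G] [LocallyCompactSpace G] (gp : TopGroupoid G)
    (p : sigmaZero gp → G)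
    (hp : ∀ H : sigmaZero gp, gp.IsIsotropySubgroup H.1.1 (p H)) :
    Continuous p ∧
      ∀ K : Set G, K ⊆ {u | gp.src u = u} → IsCompact K → IsCompact (p ⁻¹' K) := by
  constructor
  · rw [continuous_def]
    intro V hV
    rw [isOpen_iff_forall_mem_open]
    intro H hH
    refine ⟨Subtype.val ⁻¹' {F : FellCloseds G | (F.1 ∩ gp.src ⁻¹' V).Nonempty},
      ?_, (fell_isOpen_hits (hV.preimage gp.continuous_src)).preimage
        continuous_subtype_val, ?_⟩
    · rintro H' ⟨x, hxF, hxV⟩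
      exact Set.mem_preimage.mpr (((hp H').2.2.2.1 x hxF).1 ▸ hxV)
    · exact ⟨p H, (hp H).2.2.1, by
        simp only [Set.mem_preimage]; rw [(hp H).2.1]; exact hH⟩
  · intro K hKu hK
    haveI := fellCompactSpace (G := G)
    have hCc : IsCompact {F : FellCloseds G | ∃ u ∈ K, gp.IsIsotropySubgroup F.1 u} :=
      (isClosed_isoSet gp hKu hK).isCompact
    have himg : Subtype.val '' (p ⁻¹' K) =
        {F : FellCloseds G | ∃ u ∈ K, gp.IsIsotropySubgroup F.1 u} := by
      ext F
      constructor
      · rintro ⟨H, hH, rfl⟩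
        exact ⟨p H, hH, hp H⟩
      · rintro ⟨u, huK, hu⟩
        have hmem : F ∈ sigmaZero gp := ⟨u, hu⟩
        have heq : p ⟨F, hmem⟩ = u := unit_unique gp (hp ⟨F, hmem⟩) hu
        exact ⟨⟨F, hmem⟩, by simpa [Set.mem_preimage, heq] using huK, rfl⟩
    rw [Topology.IsEmbedding.subtypeVal.isCompact_iff, himg]
    exact hCc
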